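/- Let j, m ∈ N, ℓ := n/2^{j+m}, k := 2^{2m}, and fix δ, η > 0 and constants 0 < α < b. There exists C > 0 such that for all sufficiently small ε > 0 and all sufficiently large n the following holds for every function PT as in the hypotheses and every v ∈ {1,…,2^j}²: if Tile_n(j,v) is (δ, S¹(η), ℓ, k, ε)-Stable, then every point of Tile_n(j,v) is (2δ, S¹(η), ℓ', k')-Stable, where ℓ' := max(C√ε·(n/2^j), ℓ) and k' := kℓ/ℓ'. -/

import Mathlib

/-!
Take `C = 1` and `ε` so small that `√ε ≤ 2⁻ᵐ`: then `ℓ' = ℓ` and `k' = k`. Fix `z` in the tile.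
The lattice points of a subsquare of side `t ≈ √ε · (side of the tile)` around `z` outnumber the
`ε`-fraction of unstable lattice points of the tile, so some stable lattice point `z₀` lies within
distance `2t` of `z`. By the triangle inequality and the linear upper bound on `PT`, the distances
`PT(z, z + wθ)` and `PT(z₀, z₀ + wθ)` differ by `O(b t)` uniformly in `w`, which is a small
fraction of `PT(z₀, z₀ + ℓθ) ≥ αℓ` once `ε` is small and `n` is large; a perturbation of this size
turns the stability ratios `1 + δ` at `z₀` into `1 + 2δ` at `z`.
-/

noncomputable section

/-- Euclidean norm on `ℝ²`. -/
def norm2 (p : ℝ × ℝ) : ℝ := Real.sqrt (p.1 ^ 2 + p.2 ^ 2)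

/-- The box `[-r, r]² ⊆ ℝ²`. -/
def Box (r : ℝ) : Set (ℝ × ℝ) := {p | |p.1| ≤ r ∧ |p.2| ≤ r}

/-- The lattice box `[-r, r]² ∩ ℤ²`. -/
def LBox (r : ℝ) : Set (ℤ × ℤ) := {z | |(z.1 : ℝ)| ≤ r ∧ |(z.2 : ℝ)| ≤ r}

/-- The unit vector at angle `a`. -/
def dir (a : ℝ) : ℝ × ℝ := (Real.cos a, Real.sin a)

/-- `z` is `(δ, θ, ℓ, k)`-stable for the distance function `D`: for every integer
`1 ≤ k' ≤ k`, `k'·D(z, z+ℓθ)/(1+δ) ≤ D(z, z+k'ℓθ) ≤ (1+δ)·k'·D(z, z+ℓθ)`. -/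
def StablePt (D : ℝ × ℝ → ℝ × ℝ → ℝ) (δ : ℝ) (θ : ℝ × ℝ) (ℓ : ℝ) (k : ℝ)
    (z : ℝ × ℝ) : Prop :=
  ∀ k' : ℕ, 1 ≤ k' → (k' : ℝ) ≤ k →
    (k' : ℝ) * D z (z + ℓ • θ) / (1 + δ) ≤ D z (z + ((k' : ℝ) * ℓ) • θ) ∧
      D z (z + ((k' : ℝ) * ℓ) • θ) ≤ (1 + δ) * (k' : ℝ) * D z (z + ℓ • θ)

/-- `z` is `(δ, S¹(η), ℓ, k)`-stable: it is `(δ, θ, ℓ, k)`-stable for every direction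
`θ` in the discretized circle `S¹(η) = {0, η, 2η, …, 2π − η}`. -/
def StableDirs (D : ℝ × ℝ → ℝ × ℝ → ℝ) (δ η ℓ k : ℝ) (z : ℝ × ℝ) : Prop :=
  ∀ i : ℕ, (i : ℝ) * η ≤ 2 * Real.pi - η → StablePt D δ (dir ((i : ℝ) * η)) ℓ k z

/-- The gradient function `grad(z, θ, ℓ) = D(z, z + ℓθ)/ℓ`. -/
def grad (D : ℝ × ℝ → ℝ × ℝ → ℝ) (z : ℝ × ℝ) (θ : ℝ × ℝ) (ℓ : ℝ) : ℝ :=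
  D z (z + ℓ • θ) / ℓ

/-- `D : ℝ² × ℝ² → [0,∞)` satisfies the triangle inequality, `D(x,y) ≤ 3b|x−y| + 2b`
everywhere, and `α|x−y| ≤ D(x,y)` for `x, y ∈ Box(R)` with `|x−y| ≥ rt`. -/
def GoodPT (α b R rt : ℝ) (D : ℝ × ℝ → ℝ × ℝ → ℝ) : Prop :=
  (∀ x y, 0 ≤ D x y) ∧
  (∀ x y z, D x z ≤ D x y + D y z) ∧
  (∀ x y, D x y ≤ 3 * b * norm2 (x - y) + 2 * b) ∧
  (∀ x y, x ∈ Box R → y ∈ Box R → rt ≤ norm2 (x - y) → α * norm2 (x - y) ≤ D x y)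

/-- Index set `{1, …, 2^j}²` for the tiles of `Box(r)`. -/
def Idx (j : ℕ) : Set (ℕ × ℕ) := {v | 1 ≤ v.1 ∧ v.1 ≤ 2 ^ j ∧ 1 ≤ v.2 ∧ v.2 ≤ 2 ^ j}

/-- `Tile r j v`: the `v`-th closed square tile in the partition of `Box(r) = [-r,r]²`
into `2^{2j}` congruent axis-parallel squares, `v ∈ {1, …, 2^j}²`. -/
def Tile (r : ℝ) (j : ℕ) (v : ℕ × ℕ) : Set (ℝ × ℝ) :=
  {p | -r + ((v.1 : ℝ) - 1) * (2 * r / 2 ^ j) ≤ p.1 ∧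
       p.1 ≤ -r + (v.1 : ℝ) * (2 * r / 2 ^ j) ∧
       -r + ((v.2 : ℝ) - 1) * (2 * r / 2 ^ j) ≤ p.2 ∧
       p.2 ≤ -r + (v.2 : ℝ) * (2 * r / 2 ^ j)}

/-- The lattice points of a tile. -/
def TileLat (r : ℝ) (j : ℕ) (v : ℕ × ℕ) : Set (ℤ × ℤ) :=
  {z | ((z.1 : ℝ), (z.2 : ℝ)) ∈ Tile r j v}

/-- `Tile r j v` is `(δ, S¹(η), ℓ, k, ε)`-stable: at least a `(1−ε)` fraction of its
lattice points are `(δ, S¹(η), ℓ, k)`-stable. -/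
def TileFracStable (D : ℝ × ℝ → ℝ × ℝ → ℝ) (δ η ℓ k ε : ℝ) (r : ℝ) (j : ℕ)
    (v : ℕ × ℕ) : Prop :=
  (1 - ε) * ((TileLat r j v).ncard : ℝ) ≤
    (({z ∈ TileLat r j v | StableDirs D δ η ℓ k ((z.1 : ℝ), (z.2 : ℝ))}).ncard : ℝ)

/-- `Tile r j v` is `(δ, ℓ, k)`-stable: for all `z, z'` in the tile, every unit
direction `θ` and all integers `1 ≤ k₁, k₂ ≤ k`,
`1/(1+δ) ≤ grad(z,θ,k₁ℓ)/grad(z',θ,k₂ℓ) ≤ 1+δ`. -/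
def TileGradStable (D : ℝ × ℝ → ℝ × ℝ → ℝ) (δ ℓ k : ℝ) (r : ℝ) (j : ℕ)
    (v : ℕ × ℕ) : Prop :=
  ∀ z ∈ Tile r j v, ∀ z' ∈ Tile r j v, ∀ θ : ℝ × ℝ, norm2 θ = 1 →
    ∀ k₁ k₂ : ℕ, 1 ≤ k₁ → (k₁ : ℝ) ≤ k → 1 ≤ k₂ → (k₂ : ℝ) ≤ k →
      1 / (1 + δ) ≤ grad D z θ ((k₁ : ℝ) * ℓ) / grad D z' θ ((k₂ : ℝ) * ℓ) ∧
        grad D z θ ((k₁ : ℝ) * ℓ) / grad D z' θ ((k₂ : ℝ) * ℓ) ≤ 1 + δ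

open Set

lemma norm2_sub_comm (p q : ℝ × ℝ) : norm2 (p - q) = norm2 (q - p) := by
  simp only [norm2, Prod.fst_sub, Prod.snd_sub]
  ring_nf

lemma norm2_le_abs_add_abs (p : ℝ × ℝ) : norm2 p ≤ |p.1| + |p.2| := by
  rw [norm2, Real.sqrt_le_left (by positivity)]
  nlinarith [abs_nonneg p.1, abs_nonneg p.2, sq_abs p.1, sq_abs p.2]

lemma norm2_smul_dir (w a : ℝ) : norm2 (w • dir a) = |w| := by
  have h : (w * Real.cos a) ^ 2 + (w * Real.sin a) ^ 2 = w ^ 2 := by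
    linear_combination w ^ 2 * Real.cos_sq_add_sin_sq a
  simp only [norm2, dir, Prod.smul_mk, smul_eq_mul, h, Real.sqrt_sq_eq_abs]

lemma Box_mono {r s : ℝ} (h : r ≤ s) : Box r ⊆ Box s :=
  fun _ hp => ⟨hp.1.trans h, hp.2.trans h⟩

lemma add_smul_dir_mem_Box {p : ℝ × ℝ} {r w : ℝ} (hp : p ∈ Box r) (hw : 0 ≤ w) (a : ℝ) :
    p + w • dir a ∈ Box (r + w) := by
  have h1 : |w * Real.cos a| ≤ w := by
    rw [abs_mul, abs_of_nonneg hw]; exact mul_le_of_le_one_right hw (Real.abs_cos_le_one a)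
  have h2 : |w * Real.sin a| ≤ w := by
    rw [abs_mul, abs_of_nonneg hw]; exact mul_le_of_le_one_right hw (Real.abs_sin_le_one a)
  exact ⟨(abs_add_le _ _).trans (add_le_add hp.1 h1), (abs_add_le _ _).trans (add_le_add hp.2 h2)⟩

namespace GoodPT

variable {α b R rt : ℝ} {D : ℝ × ℝ → ℝ × ℝ → ℝ}

lemma abs_sub_le_of_near (hD : GoodPT α b R rt D) (hb : 0 ≤ b) {p q p' q' : ℝ × ℝ} {ρ : ℝ}
    (hp : norm2 (p - p') ≤ ρ) (hq : norm2 (q - q') ≤ ρ) :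
    |D p q - D p' q'| ≤ 2 * (3 * b * ρ + 2 * b) := by
  obtain ⟨-, htri, hup, -⟩ := hD
  have hp' : norm2 (p' - p) ≤ ρ := norm2_sub_comm p' p ▸ hp
  have hq' : norm2 (q' - q) ≤ ρ := norm2_sub_comm q' q ▸ hq
  have near : ∀ x y, norm2 (x - y) ≤ ρ → D x y ≤ 3 * b * ρ + 2 * b := fun x y h =>
    (hup x y).trans (by gcongr)
  rw [abs_le]
  constructor
  · linarith [htri p' p q', htri p q q', near p' p hp', near q q' hq]
  · linarith [htri p p' q, htri p' q' q, near p p' hp, near q' q hq']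

lemma mul_abs_le_apply_add_smul_dir (hD : GoodPT α b R rt D) {p : ℝ × ℝ} {w a : ℝ}
    (hp : p ∈ Box R) (hq : p + w • dir a ∈ Box R) (hw : rt ≤ |w|) :
    α * |w| ≤ D p (p + w • dir a) := by
  have hpq : norm2 (p - (p + w • dir a)) = |w| := by
    rw [sub_add_cancel_left, ← neg_smul, norm2_smul_dir, abs_neg]
  simpa only [hpq] using hD.2.2.2 p _ hp hq (hpq ▸ hw)

end GoodPT

lemma le_mul_of_perturbation {δ e K G A X Y : ℝ} (hδ : 0 ≤ δ) (he : 0 ≤ e) (hK : 1 ≤ K)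
    (hG : 2 * (1 + δ) * (1 + 2 * δ) * e ≤ δ * G) (hA : A ≤ (1 + δ) * K * G)
    (hX : X ≤ A + e) (hY : G ≤ Y + e) : X ≤ (1 + 2 * δ) * K * Y := by
  nlinarith [mul_le_mul_of_nonneg_left hY (by positivity : 0 ≤ (1 + δ) * K),
    mul_le_mul_of_nonneg_left hG (by positivity : 0 ≤ K), mul_nonneg hδ he,
    mul_nonneg (mul_nonneg hδ hδ) he, mul_nonneg (sub_nonneg.2 hK) he,
    mul_nonneg (mul_nonneg hδ (sub_nonneg.2 hK)) he]

lemma mul_le_of_perturbation {δ e K G A X Y : ℝ} (hδ : 0 ≤ δ) (he : 0 ≤ e) (hK : 1 ≤ K)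
    (hG : 2 * (1 + δ) * (1 + 2 * δ) * e ≤ δ * G) (hA : K * G / (1 + δ) ≤ A)
    (hX : A ≤ X + e) (hY : Y ≤ G + e) : K * Y / (1 + 2 * δ) ≤ X := by
  rw [div_le_iff₀ (by positivity)] at hA ⊢
  nlinarith [mul_le_mul_of_nonneg_left hY (by positivity : 0 ≤ K),
    mul_le_mul_of_nonneg_left hG (by positivity : 0 ≤ K), mul_nonneg hδ he,
    mul_nonneg (mul_nonneg hδ hδ) he, mul_nonneg (sub_nonneg.2 hK) he,
    mul_nonneg (mul_nonneg hδ (sub_nonneg.2 hK)) he,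
    mul_le_mul_of_nonneg_left hX (by positivity : 0 ≤ (1 + δ) * (1 + 2 * δ))]

lemma StablePt.of_near {D : ℝ × ℝ → ℝ × ℝ → ℝ} {δ ℓ k e : ℝ} {θ z z₀ : ℝ × ℝ} (hδ : 0 ≤ δ)
    (hst : StablePt D δ θ ℓ k z₀) (hnear : ∀ w : ℝ, |D z (z + w • θ) - D z₀ (z₀ + w • θ)| ≤ e)
    (hG : 2 * (1 + δ) * (1 + 2 * δ) * e ≤ δ * D z₀ (z₀ + ℓ • θ)) :
    StablePt D (2 * δ) θ ℓ k z := by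
  intro k' hk'1 hk'k
  have hK : (1 : ℝ) ≤ k' := by exact_mod_cast hk'1
  have he : 0 ≤ e := (abs_nonneg _).trans (hnear 0)
  obtain ⟨hlo, hhi⟩ := hst k' hk'1 hk'k
  obtain ⟨hY₁, hY₂⟩ := abs_le.1 (hnear ℓ)
  obtain ⟨hX₁, hX₂⟩ := abs_le.1 (hnear (k' * ℓ))
  exact ⟨mul_le_of_perturbation hδ he hK hG hlo (by linarith) (by linarith),
    le_mul_of_perturbation hδ he hK hG hhi (by linarith) (by linarith)⟩

open Finset in
lemma sub_one_le_card_Icc_ceil_floor (u t : ℝ) : t - 1 ≤ (#(Icc ⌈u⌉ ⌊u + t⌋) : ℝ) := by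
  rw [Int.card_Icc]
  have h : ((⌊u + t⌋ + 1 - ⌈u⌉ : ℤ) : ℝ) ≤ ((⌊u + t⌋ + 1 - ⌈u⌉).toNat : ℝ) := by
    exact_mod_cast Int.self_le_toNat _
  push_cast at h
  linarith [Int.sub_one_lt_floor (u + t), Int.ceil_lt_add_one u]

open Finset in
lemma card_Icc_ceil_floor_le (u : ℝ) {t : ℝ} (ht : 0 ≤ t) :
    (#(Icc ⌈u⌉ ⌊u + t⌋) : ℝ) ≤ t + 1 := by
  rw [Int.card_Icc]
  rcases le_or_gt (⌊u + t⌋ + 1 - ⌈u⌉) 0 with h | h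
  · rw [Int.toNat_eq_zero.2 h]; push_cast; linarith
  · rw [← Int.cast_natCast, Int.toNat_of_nonneg h.le]
    push_cast
    linarith [Int.floor_le (u + t), Int.le_ceil u]

def latticeSquare (x y t : ℝ) : Set (ℤ × ℤ) :=
  {p | (p.1 : ℝ) ∈ Icc x (x + t) ∧ (p.2 : ℝ) ∈ Icc y (y + t)}

lemma latticeSquare_eq (x y t : ℝ) :
    latticeSquare x y t = ↑(Finset.Icc ⌈x⌉ ⌊x + t⌋ ×ˢ Finset.Icc ⌈y⌉ ⌊y + t⌋) := by
  ext p
  simp only [latticeSquare, mem_ofPred_eq, Finset.coe_product, mem_prod, Finset.mem_coe,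
    Int.cast_mem_Icc_iff]

lemma latticeSquare_finite (x y t : ℝ) : (latticeSquare x y t).Finite := by
  rw [latticeSquare_eq]; exact Finset.finite_toSet _

lemma sq_sub_one_le_ncard_latticeSquare (x y : ℝ) {t : ℝ} (ht : 1 ≤ t) :
    (t - 1) ^ 2 ≤ ((latticeSquare x y t).ncard : ℝ) := by
  rw [latticeSquare_eq, ncard_coe_finset, Finset.card_product, Nat.cast_mul, sq]
  exact mul_le_mul (sub_one_le_card_Icc_ceil_floor x t) (sub_one_le_card_Icc_ceil_floor y t)
    (by linarith) (Nat.cast_nonneg _)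

lemma ncard_latticeSquare_le (x y : ℝ) {t : ℝ} (ht : 0 ≤ t) :
    ((latticeSquare x y t).ncard : ℝ) ≤ (t + 1) ^ 2 := by
  rw [latticeSquare_eq, ncard_coe_finset, Finset.card_product, Nat.cast_mul, sq]
  exact mul_le_mul (card_Icc_ceil_floor_le x ht) (card_Icc_ceil_floor_le y ht)
    (Nat.cast_nonneg _) (by linarith)

lemma latticeSquare_subset {x y t x' y' t' : ℝ} (hx : x ≤ x') (hx' : x' + t' ≤ x + t)
    (hy : y ≤ y') (hy' : y' + t' ≤ y + t) : latticeSquare x' y' t' ⊆ latticeSquare x y t :=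
  fun _ ⟨h₁, h₂⟩ => ⟨Icc_subset_Icc hx hx' h₁, Icc_subset_Icc hy hy' h₂⟩

lemma exists_Icc_subset_Icc_mem {a L t x : ℝ} (hx : x ∈ Icc a (a + L)) (ht₀ : 0 ≤ t)
    (ht : t ≤ L) :
    ∃ x₀, a ≤ x₀ ∧ x₀ + t ≤ a + L ∧ x ∈ Icc x₀ (x₀ + t) := by
  refine ⟨min x (a + L - t), le_min hx.1 (by linarith), by linarith [min_le_right x (a + L - t)],
    min_le_left _ _, ?_⟩
  rcases min_choice x (a + L - t) with h | h <;> rw [h] <;> linarith [hx.2]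

lemma Set.inter_nonempty_of_ncard_diff_lt {α : Type*} {T S Q : Set α} (hT : T.Finite)
    (hQ : Q ⊆ T) (h : (T \ S).ncard < Q.ncard) : (Q ∩ S).Nonempty := by
  by_contra hQS
  have : Q ⊆ T \ S := fun p hp => ⟨hQ hp, fun hpS => hQS ⟨p, hp, hpS⟩⟩
  exact (ncard_le_ncard this hT.sdiff).not_gt h

/-- If not, `S` would miss every lattice point of a subsquare of side `√ε (L + 1) + 2`
containing `z`, and there are more than `ε (L + 1) ^ 2 ≥ #(square \ S)` of those. -/
lemma exists_mem_near_of_ncard_ge {S : Set (ℤ × ℤ)} {a c L ε : ℝ} {z : ℝ × ℝ}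
    (hS : S ⊆ latticeSquare a c L) (hL : 0 ≤ L)
    (hfrac : (1 - ε) * ((latticeSquare a c L).ncard : ℝ) ≤ (S.ncard : ℝ)) (hε : 0 ≤ ε)
    (hfit : √ε * (L + 1) + 2 ≤ L) (hz₁ : z.1 ∈ Icc a (a + L)) (hz₂ : z.2 ∈ Icc c (c + L)) :
    ∃ p ∈ S, norm2 (z - ((p.1 : ℝ), (p.2 : ℝ))) ≤ 2 * (√ε * (L + 1) + 2) := by
  set t := √ε * (L + 1) + 2
  have hs := Real.sqrt_nonneg ε
  have ht : 2 ≤ t := le_add_of_nonneg_left (by positivity)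
  obtain ⟨x₀, hax, hxa, hx⟩ := exists_Icc_subset_Icc_mem hz₁ (by linarith) hfit
  obtain ⟨y₀, hcy, hyc, hy⟩ := exists_Icc_subset_Icc_mem hz₂ (by linarith) hfit
  have hT := latticeSquare_finite a c L
  have hdiff : ((latticeSquare a c L \ S).ncard : ℝ) ≤ ε * (L + 1) ^ 2 := by
    rw [ncard_sdiff hS (hT.subset hS), Nat.cast_sub (ncard_le_ncard hS hT)]
    nlinarith [ncard_latticeSquare_le a c hL]
  have hQ : ε * (L + 1) ^ 2 < ((latticeSquare x₀ y₀ t).ncard : ℝ) := by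
    refine lt_of_lt_of_le ?_ (sq_sub_one_le_ncard_latticeSquare x₀ y₀ (by linarith))
    nlinarith [Real.sq_sqrt hε]
  obtain ⟨p, ⟨hp₁, hp₂⟩, hpS⟩ := Set.inter_nonempty_of_ncard_diff_lt hT
    (latticeSquare_subset hax hxa hcy hyc) (by exact_mod_cast hdiff.trans_lt hQ)
  have h₁ : |z.1 - p.1| ≤ t :=
    abs_sub_le_iff.2 ⟨by linarith [hp₁.1, hx.2], by linarith [hp₁.2, hx.1]⟩
  have h₂ : |z.2 - p.2| ≤ t :=
    abs_sub_le_iff.2 ⟨by linarith [hp₂.1, hy.2], by linarith [hp₂.2, hy.1]⟩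
  refine ⟨p, hpS, (norm2_le_abs_add_abs _).trans ?_⟩
  simp only [Prod.fst_sub, Prod.snd_sub]
  linarith

def tileCorner (r : ℝ) (j i : ℕ) : ℝ := -r + ((i : ℝ) - 1) * (2 * r / 2 ^ j)

lemma mem_Tile_iff {r : ℝ} {j : ℕ} {v : ℕ × ℕ} {p : ℝ × ℝ} :
    p ∈ Tile r j v ↔ p.1 ∈ Icc (tileCorner r j v.1) (tileCorner r j v.1 + 2 * r / 2 ^ j) ∧
      p.2 ∈ Icc (tileCorner r j v.2) (tileCorner r j v.2 + 2 * r / 2 ^ j) := by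
  have h (i : ℕ) : -r + (i : ℝ) * (2 * r / 2 ^ j) = tileCorner r j i + 2 * r / 2 ^ j := by
    rw [tileCorner]; ring
  simp only [Tile, mem_ofPred_eq, mem_Icc, h, and_assoc, tileCorner]

lemma TileLat_eq (r : ℝ) (j : ℕ) (v : ℕ × ℕ) :
    TileLat r j v = latticeSquare (tileCorner r j v.1) (tileCorner r j v.2) (2 * r / 2 ^ j) := by
  ext
  simp only [TileLat, latticeSquare, mem_ofPred_eq, mem_Tile_iff]

lemma tileCorner_bounds {r : ℝ} {j i : ℕ} (hr : 0 ≤ r) (hi₁ : 1 ≤ i) (hi₂ : i ≤ 2 ^ j) :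
    -r ≤ tileCorner r j i ∧ tileCorner r j i + 2 * r / 2 ^ j ≤ r := by
  have hi₁' : (1 : ℝ) ≤ i := by exact_mod_cast hi₁
  have hi₂' : (i : ℝ) ≤ 2 ^ j := by exact_mod_cast hi₂
  have hside : (2 : ℝ) ^ j * (2 * r / 2 ^ j) = 2 * r := by field_simp
  have hL : 0 ≤ 2 * r / 2 ^ j := by positivity
  rw [tileCorner]
  constructor <;> nlinarith

lemma Tile_subset_Box {r : ℝ} {j : ℕ} {v : ℕ × ℕ} (hr : 0 ≤ r) (hv : v ∈ Idx j) :
    Tile r j v ⊆ Box r := by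
  intro p hp
  rw [mem_Tile_iff] at hp
  obtain ⟨h₁, h₂⟩ := tileCorner_bounds (j := j) hr hv.1 hv.2.1
  obtain ⟨h₃, h₄⟩ := tileCorner_bounds (j := j) hr hv.2.2.1 hv.2.2.2
  exact ⟨abs_le.2 ⟨by linarith [hp.1.1], by linarith [hp.1.2]⟩,
    abs_le.2 ⟨by linarith [hp.2.1], by linarith [hp.2.2]⟩⟩

lemma exists_stable_latticePoint_near {D : ℝ × ℝ → ℝ × ℝ → ℝ} {δ η ℓ k ε r : ℝ} {j : ℕ}
    {v : ℕ × ℕ} {z : ℝ × ℝ} (hfrac : TileFracStable D δ η ℓ k ε r j v) (hr : 0 ≤ r)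
    (hε : 0 ≤ ε) (hfit : √ε * (2 * r / 2 ^ j + 1) + 2 ≤ 2 * r / 2 ^ j) (hz : z ∈ Tile r j v) :
    ∃ z₀ ∈ TileLat r j v, StableDirs D δ η ℓ k ((z₀.1 : ℝ), (z₀.2 : ℝ)) ∧
      norm2 (z - ((z₀.1 : ℝ), (z₀.2 : ℝ))) ≤ 2 * (√ε * (2 * r / 2 ^ j + 1) + 2) := by
  rw [mem_Tile_iff] at hz
  rw [TileFracStable, TileLat_eq] at hfrac
  obtain ⟨p, ⟨hpT, hpS⟩, hp⟩ :=
    exists_mem_near_of_ncard_ge (sep_subset _ _) (by positivity) hfrac hε hfit hz.1 hz.2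
  exact ⟨p, (TileLat_eq r j v).symm ▸ hpT, hpS, hp⟩

lemma stableDirs_of_tileFracStable {D : ℝ × ℝ → ℝ × ℝ → ℝ} {α b δ η ℓ k ε r : ℝ} {j : ℕ}
    {v : ℕ × ℕ} {z : ℝ × ℝ} (hD : GoodPT α b (10 * r) (√r) D) (hb : 0 ≤ b) (hδ : 0 ≤ δ)
    (hv : v ∈ Idx j) (hfrac : TileFracStable D δ η ℓ k ε r j v) (hε : 0 ≤ ε)
    (hfit : √ε * (2 * r / 2 ^ j + 1) + 2 ≤ 2 * r / 2 ^ j) (hℓ : √r ≤ ℓ) (hℓr : ℓ ≤ 9 * r)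
    (herr : 4 * (1 + δ) * (1 + 2 * δ) * (3 * b * (2 * (√ε * (2 * r / 2 ^ j + 1) + 2)) + 2 * b)
      ≤ δ * (α * ℓ))
    (hz : z ∈ Tile r j v) :
    StableDirs D (2 * δ) η ℓ k z := by
  have hℓ₀ : 0 ≤ ℓ := (Real.sqrt_nonneg r).trans hℓ
  have hr : 0 ≤ r := by linarith
  obtain ⟨z₀, hz₀, hst, hnear⟩ := exists_stable_latticePoint_near hfrac hr hε hfit hz
  have hbox : ((z₀.1 : ℝ), (z₀.2 : ℝ)) ∈ Box r := Tile_subset_Box hr hv hz₀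
  intro i hi
  have hlow := hD.mul_abs_le_apply_add_smul_dir (Box_mono (by linarith) hbox)
    (Box_mono (by linarith) (add_smul_dir_mem_Box hbox hℓ₀ (i * η)))
    ((abs_of_nonneg hℓ₀).symm ▸ hℓ)
  rw [abs_of_nonneg hℓ₀] at hlow
  refine StablePt.of_near hδ (hst i hi)
    (fun w => hD.abs_sub_le_of_near hb hnear (by rwa [add_sub_add_right_eq_sub])) ?_
  nlinarith

lemma sqrt_le_div_of_sq_le {x d : ℝ} (hd : 0 < d) (h : d ^ 2 ≤ x) : √x ≤ x / d := by
  rw [le_div_iff₀ hd]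
  calc √x * d ≤ √x * √x := by gcongr; exact Real.le_sqrt_of_sq_le h
    _ = x := Real.mul_self_sqrt ((sq_nonneg d).trans h)

lemma stableDirs_dyadic_of_tileFracStable {D : ℝ × ℝ → ℝ × ℝ → ℝ} {α b δ η k ε : ℝ}
    {j m n : ℕ} {v : ℕ × ℕ} {z : ℝ × ℝ} (hD : GoodPT α b (10 * n) (√n) D) (hb : 0 ≤ b)
    (hδ : 0 ≤ δ) (hv : v ∈ Idx j)
    (hfrac : TileFracStable D δ η ((n : ℝ) / 2 ^ (j + m)) k ε n j v) (hε : 0 ≤ ε)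
    (hs : √ε ≤ 1 / 2) (hsδ : 48 * (4 * (1 + δ) * (1 + 2 * δ)) * b * 2 ^ m * √ε ≤ δ * α)
    (hn : 4 ^ (j + m) ≤ n) (hnj : 3 * 2 ^ j ≤ n)
    (hnδ : 28 * (4 * (1 + δ) * (1 + 2 * δ)) * b * 2 ^ (j + m) ≤ δ * α * n)
    (hz : z ∈ Tile n j v) :
    StableDirs D (2 * δ) η ((n : ℝ) / 2 ^ (j + m)) k z := by
  set A := 4 * (1 + δ) * (1 + 2 * δ)
  set ℓ := (n : ℝ) / 2 ^ (j + m)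
  have hn' : ((2 : ℝ) ^ (j + m)) ^ 2 ≤ n := by
    rw [← pow_mul, mul_comm, pow_mul]; exact_mod_cast hn
  have hℓ : 0 < ℓ := by
    have : (0 : ℝ) < n := lt_of_lt_of_le (by positivity) hn'
    positivity
  have hL : 2 * (n : ℝ) / 2 ^ j = 2 * 2 ^ m * ℓ := by
    simp only [ℓ, pow_add]; field_simp
  have hL₆ : 6 ≤ 2 * (n : ℝ) / 2 ^ j := by
    rw [le_div_iff₀ (by positivity)]; exact_mod_cast (by omega : 6 * 2 ^ j ≤ 2 * n)
  have h28 : 28 * A * b ≤ δ * α * ℓ := by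
    simp only [ℓ]
    rw [← mul_div_assoc, le_div_iff₀ (by positivity)]
    exact hnδ
  refine stableDirs_of_tileFracStable hD hb hδ hv hfrac hε ?_
    (sqrt_le_div_of_sq_le (by positivity) hn')
    ((div_le_self (Nat.cast_nonneg n) (one_le_pow₀ (by norm_num))).trans (by linarith)) ?_ hz
  · nlinarith [mul_le_mul_of_nonneg_right hs (by linarith : (0 : ℝ) ≤ 2 * n / 2 ^ j + 1)]
  · rw [hL] at hL₆ ⊢
    have hAbs : 0 ≤ A * b * √ε := by positivity
    nlinarith [mul_le_mul_of_nonneg_right hsδ hℓ.le,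
      mul_le_mul_of_nonneg_left (by linarith : (1 : ℝ) ≤ 2 * 2 ^ m * ℓ) hAbs]

theorem tile_frac_stable_implies_all_stable_general
    (j m : ℕ) (δ η α b : ℝ) (hδ : 0 < δ) (hα : 0 < α) (hab : α < b) :
    ∃ C : ℝ, 0 < C ∧ ∃ ε₀ : ℝ, 0 < ε₀ ∧ ∀ ε : ℝ, 0 < ε → ε ≤ ε₀ →
    ∃ N : ℕ, ∀ n : ℕ, N ≤ n →
    ∀ D : ℝ × ℝ → ℝ × ℝ → ℝ, GoodPT α b (10 * n) (Real.sqrt n) D →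
    ∀ v ∈ Idx j,
      TileFracStable D δ η ((n : ℝ) / 2 ^ (j + m)) ((2 : ℝ) ^ (2 * m)) ε (n : ℝ) j v →
      ∀ z ∈ Tile (n : ℝ) j v,
        StableDirs D (2 * δ) η
          (max (C * Real.sqrt ε * ((n : ℝ) / 2 ^ j)) ((n : ℝ) / 2 ^ (j + m)))
          ((2 : ℝ) ^ (2 * m) * ((n : ℝ) / 2 ^ (j + m)) /
            max (C * Real.sqrt ε * ((n : ℝ) / 2 ^ j)) ((n : ℝ) / 2 ^ (j + m))) z := by
  have hb : 0 < b := hα.trans hab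
  set A := 4 * (1 + δ) * (1 + 2 * δ)
  -- `√ε ≤ s₀` collapses the `max`, fits the subsquare into the tile and makes the error small
  set s₀ := min (1 / 2) (min (2 ^ m)⁻¹ (δ * α / (48 * A * b * 2 ^ m)))
  have hs₀ : 0 < s₀ := by positivity
  refine ⟨1, one_pos, s₀ ^ 2, by positivity, fun ε hε hεs₀ => ?_⟩
  have hs : √ε ≤ s₀ := (Real.sqrt_le_sqrt hεs₀).trans_eq (Real.sqrt_sq hs₀.le)
  have hsm : √ε ≤ (2 ^ m)⁻¹ := hs.trans ((min_le_right _ _).trans (min_le_left _ _))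
  have hsδ : 48 * A * b * 2 ^ m * √ε ≤ δ * α := by
    rw [← le_div_iff₀' (by positivity)]
    exact hs.trans ((min_le_right _ _).trans (min_le_right _ _))
  refine ⟨max (4 ^ (j + m)) (max (3 * 2 ^ j) ⌈28 * A * b * 2 ^ (j + m) / (δ * α)⌉₊),
    fun n hn D hD v hv hfrac z hz => ?_⟩
  simp only [max_le_iff] at hn
  have hn₀ : 0 < n := lt_of_lt_of_le (by positivity) hn.1
  have hmax : 1 * √ε * ((n : ℝ) / 2 ^ j) ≤ (n : ℝ) / 2 ^ (j + m) := by
    rw [one_mul, pow_add, ← div_div, div_eq_inv_mul _ (2 ^ m : ℝ)]; gcongr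
  rw [max_eq_right hmax, mul_div_cancel_right₀ _ (by positivity)]
  refine stableDirs_dyadic_of_tileFracStable hD hb.le hδ.le hv hfrac hε.le
    (hs.trans (min_le_left _ _)) hsδ hn.1 hn.2.1 ?_ hz
  rw [← div_le_iff₀' (by positivity)]
  exact (Nat.le_ceil _).trans (by exact_mod_cast hn.2.2)

/-- With `ℓ := n/2^{j+m}`, `k := 2^{2m}`: there exists `C > 0` such
that for all sufficiently small `ε > 0` and all sufficiently large `n`, if
`Tile_n(j,v)` is `(δ, S¹(η), ℓ, k, ε)`-stable then every point of `Tile_n(j,v)` is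
`(2δ, S¹(η), ℓ', k')`-stable, where `ℓ' := max(C√ε·(n/2^j), ℓ)` and `k' := kℓ/ℓ'`. -/
theorem tile_frac_stable_implies_all_stable
    (j m : ℕ) (δ η α b : ℝ) (hδ : 0 < δ) (hη : 0 < η) (hα : 0 < α) (hab : α < b) :
    ∃ C : ℝ, 0 < C ∧ ∃ ε₀ : ℝ, 0 < ε₀ ∧ ∀ ε : ℝ, 0 < ε → ε ≤ ε₀ →
    ∃ N : ℕ, ∀ n : ℕ, N ≤ n →
    ∀ D : ℝ × ℝ → ℝ × ℝ → ℝ, GoodPT α b (10 * n) (Real.sqrt n) D →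
    ∀ v ∈ Idx j,
      TileFracStable D δ η ((n : ℝ) / 2 ^ (j + m)) ((2 : ℝ) ^ (2 * m)) ε (n : ℝ) j v →
      ∀ z ∈ Tile (n : ℝ) j v,
        StableDirs D (2 * δ) η
          (max (C * Real.sqrt ε * ((n : ℝ) / 2 ^ j)) ((n : ℝ) / 2 ^ (j + m)))
          ((2 : ℝ) ^ (2 * m) * ((n : ℝ) / 2 ^ (j + m)) /
            max (C * Real.sqrt ε * ((n : ℝ) / 2 ^ j)) ((n : ℝ) / 2 ^ (j + m))) z :=
  tile_frac_stable_implies_all_stable_general j m δ η α b hδ hα hab
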